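/- For every x ∈ (0, 1/2], there exists a unique y₁ ∈ (0,1) such that f_x(y₁) = 1. -/

import Mathlib

/-!
With `N = ⌊1/x⌋`, `f_x` is continuous, vanishes at `0` because `i x ≤ N x ≤ 1`,
and `f_x(1) = x N (N+1) / 2 > N / 2 ≥ 1` because `x (N+1) > 1` and `N ≥ 2`. Where `f_x` is positive
some summand `i x + y - 1` is positive and strictly increasing in `y`, so `f_x` is strictly increasing
on `{f_x > 0}`: the value `1` is attained (intermediate value theorem) exactly once.
-/

/-- For `x ∈ (0,1]`, the function `f_x(y) = ∑_{i=0}^{⌊1/x⌋} max(i·x + y − 1, 0)`. -/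
noncomputable def fx (x y : ℝ) : ℝ :=
  ∑ i ∈ Finset.range (⌊1 / x⌋₊ + 1), max ((i : ℝ) * x + y - 1) 0

open Finset

theorem continuous_fx (x : ℝ) : Continuous (fx x) :=
  continuous_finsetSum _ fun _ _ => by fun_prop

theorem natFloor_one_div_mul_le_one {x : ℝ} (hx : 0 ≤ x) : (⌊1 / x⌋₊ : ℝ) * x ≤ 1 := by
  rcases hx.eq_or_lt with rfl | hx
  · simp
  · calc (⌊1 / x⌋₊ : ℝ) * x ≤ 1 / x * x := by gcongr; exact Nat.floor_le (by positivity)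
      _ = 1 := by field_simp

theorem fx_eq_zero_of_nonpos {x y : ℝ} (hx : 0 ≤ x) (hy : y ≤ 0) : fx x y = 0 := by
  refine sum_eq_zero fun i hi => max_eq_right ?_
  have hiN : (i : ℝ) ≤ ⌊1 / x⌋₊ := by exact_mod_cast Nat.lt_succ_iff.mp (mem_range.mp hi)
  nlinarith [natFloor_one_div_mul_le_one hx]

theorem fx_one {x : ℝ} (hx : 0 ≤ x) : fx x 1 = x * ∑ i ∈ range (⌊1 / x⌋₊ + 1), (i : ℝ) := by
  rw [fx, mul_sum]
  refine sum_congr rfl fun i _ => ?_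
  rw [add_sub_cancel_right, max_eq_left (by positivity), mul_comm]

theorem one_lt_fx_one {x : ℝ} (hx0 : 0 < x) (hx : x ≤ 1 / 2) : 1 < fx x 1 := by
  set N := ⌊1 / x⌋₊
  have hN : (2 : ℝ) ≤ N := by
    have h2 : ((2 : ℕ) : ℝ) ≤ 1 / x := by rw [le_div_iff₀ hx0]; push_cast; linarith
    exact_mod_cast Nat.le_floor h2
  have hxN : 1 < x * (N + 1) := by
    have := Nat.lt_floor_add_one (1 / x)
    rw [div_lt_iff₀ hx0] at this
    linarith
  have hgauss : (∑ i ∈ range (N + 1), (i : ℝ)) * 2 = (N + 1) * N := by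
    rw [← Nat.cast_sum]
    exact_mod_cast (Nat.add_sub_cancel N 1 ▸ sum_range_id_mul_two (N + 1))
  rw [fx_one hx0.le]
  nlinarith

theorem fx_lt_fx_of_lt {x y₁ y₂ : ℝ} (hy : y₁ < y₂) (hpos : 0 < fx x y₂) :
    fx x y₁ < fx x y₂ := by
  have hpos' : ∑ _ ∈ range (⌊1 / x⌋₊ + 1), (0 : ℝ) < fx x y₂ := by rwa [sum_const_zero]
  obtain ⟨i, hi, hterm⟩ := exists_lt_of_sum_lt hpos'
  have hactive : 0 < (i : ℝ) * x + y₂ - 1 := by simpa using hterm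
  refine sum_lt_sum (fun _ _ => max_le_max (by linarith) le_rfl) ⟨i, hi, ?_⟩
  rw [max_eq_left hactive.le]
  exact max_lt (by linarith) hactive

theorem strictMonoOn_fx (x : ℝ) : StrictMonoOn (fx x) {y | 0 < fx x y} :=
  fun _ _ _ hy₂ hy => fx_lt_fx_of_lt hy hy₂

theorem stmt_3 (x : ℝ) (hx : x ∈ Set.Ioc (0 : ℝ) (1 / 2)) :
    ∃! y : ℝ, y ∈ Set.Ioo (0 : ℝ) 1 ∧ fx x y = 1 := by
  obtain ⟨hx0, hx2⟩ := hx
  have hone : (1 : ℝ) ∈ Set.Ioo (fx x 0) (fx x 1) :=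
    ⟨by rw [fx_eq_zero_of_nonpos hx0.le le_rfl]; exact one_pos, one_lt_fx_one hx0 hx2⟩
  obtain ⟨y, hy, hfy⟩ := intermediate_value_Ioo zero_le_one (continuous_fx x).continuousOn hone
  refine ⟨y, ⟨hy, hfy⟩, fun z ⟨_, hfz⟩ => ?_⟩
  exact (strictMonoOn_fx x).injOn (by simp [hfz]) (by simp [hfy]) (hfz.trans hfy.symm)
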